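/- Let Δ > 0, D_y > 0 and A ∈ ℝ with max(Δ², D_y²/4) ≤ A ≤ Δ² + D_y²/4. Then P_l(Δ, A) = 1 − (A/(D_y Δ))·[arcsin(Δ/√A) − arcsin(√(4A − D_y²)/(2√A))] − (1/(4Δ))·√(4A − D_y²) − (1/D_y)·√(A − Δ²). -/

import Mathlib

open MeasureTheory Real Set

/-- The conditional outage probability `P_l(Δ, A)`: the normalized area of the set of
points `(ε, y)` in the rectangle `[0, Δ] × [−D_y/2, D_y/2]` with `y² ≥ A − ε²`. -/
noncomputable def Pl (Dy Δ A : ℝ) : ℝ :=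
  (volume {p : ℝ × ℝ | p.1 ∈ Icc 0 Δ ∧ p.2 ∈ Icc (-(Dy / 2)) (Dy / 2) ∧
    A - p.1 ^ 2 ≤ p.2 ^ 2}).toReal / (Δ * Dy)

-- slice measure lemma
lemma slice_vol (Dy A x : ℝ) :
    volume {y : ℝ | y ∈ Icc (-(Dy / 2)) (Dy / 2) ∧ A - x ^ 2 ≤ y ^ 2}
      = ENNReal.ofReal (Dy - 2 * Real.sqrt (A - x ^ 2)) := by
  set c := A - x ^ 2 with hcdef
  have hself : {y : ℝ | y ∈ Icc (-(Dy / 2)) (Dy / 2) ∧ c ≤ y ^ 2}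
      = Icc (-(Dy / 2)) (-Real.sqrt c) ∪ Icc (Real.sqrt c) (Dy / 2) := by
    ext y
    have h1 : c ≤ y ^ 2 ↔ Real.sqrt c ≤ |y| := by
      rw [← Real.sqrt_sq_eq_abs]
      exact (Real.sqrt_le_sqrt_iff (sq_nonneg y)).symm
    simp only [mem_setOf_eq, mem_Icc, mem_union, h1, le_abs]
    have hs := Real.sqrt_nonneg c
    constructor
    · rintro ⟨⟨h2, h3⟩, h4 | h4⟩
      · right; exact ⟨h4, h3⟩
      · left; exact ⟨h2, by linarith⟩
    · rintro (⟨h2, h3⟩ | ⟨h2, h3⟩)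
      · exact ⟨⟨h2, by linarith⟩, Or.inr (by linarith)⟩
      · exact ⟨⟨by linarith, h3⟩, Or.inl h2⟩
  rw [hself, measure_union₀ measurableSet_Icc.nullMeasurableSet]
  · rw [Real.volume_Icc, Real.volume_Icc]
    have : -Real.sqrt c - -(Dy / 2) = Dy / 2 - Real.sqrt c := by ring
    rw [this, ← two_mul, show ((2:ENNReal)) = ENNReal.ofReal 2 by simp,
      ← ENNReal.ofReal_mul (by norm_num)]
    ring_nf
  · have hsub : Icc (-(Dy/2)) (-Real.sqrt c) ∩ Icc (Real.sqrt c) (Dy/2)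
        ⊆ Icc (Real.sqrt c) (-Real.sqrt c) := fun y hy => ⟨hy.2.1, hy.1.2⟩
    refine measure_mono_null hsub ?_
    rw [Real.volume_Icc, ENNReal.ofReal_eq_zero]
    nlinarith [Real.sqrt_nonneg c]

lemma deriv_F (Dy A x : ℝ) (hx0 : 0 ≤ x) (hxA : x ^ 2 < A) :
    HasDerivAt (fun t : ℝ => Dy * t - (t * Real.sqrt (A - t ^ 2)
        + A * Real.arcsin (t / Real.sqrt A)))
      (Dy - 2 * Real.sqrt (A - x ^ 2)) x := by
  have hA : 0 < A := lt_of_le_of_lt (sq_nonneg x) hxA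
  have hsA : 0 < Real.sqrt A := Real.sqrt_pos.2 hA
  have hc : 0 < A - x ^ 2 := by linarith
  have hs : 0 < Real.sqrt (A - x ^ 2) := Real.sqrt_pos.2 hc
  have hs2 : Real.sqrt (A - x ^ 2) ^ 2 = A - x ^ 2 := Real.sq_sqrt hc.le
  have hxlt : x < Real.sqrt A := by
    rw [show x = Real.sqrt (x ^ 2) by rw [Real.sqrt_sq hx0]]
    exact Real.sqrt_lt_sqrt (sq_nonneg x) hxA
  -- derivative of inner A - t^2
  have h1 : HasDerivAt (fun t : ℝ => A - t ^ 2) (-(2 * x)) x := by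
    simpa using (hasDerivAt_pow 2 x).const_sub A
  have h2 : HasDerivAt (fun t : ℝ => Real.sqrt (A - t ^ 2))
      (-(2 * x) / (2 * Real.sqrt (A - x ^ 2))) x := h1.sqrt (by positivity)
  have h3 : HasDerivAt (fun t : ℝ => t * Real.sqrt (A - t ^ 2))
      (1 * Real.sqrt (A - x ^ 2) + x * (-(2 * x) / (2 * Real.sqrt (A - x ^ 2)))) x :=
    (hasDerivAt_id x).mul h2
  have hne1 : x / Real.sqrt A ≠ -1 := by
    have : (0:ℝ) ≤ x / Real.sqrt A := by positivity
    intro h; rw [h] at this; linarith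
  have hne2 : x / Real.sqrt A ≠ 1 := by
    have : x / Real.sqrt A < 1 := (div_lt_one hsA).2 hxlt
    exact ne_of_lt this
  have h4 : HasDerivAt (fun t : ℝ => Real.arcsin (t / Real.sqrt A))
      ((1 / Real.sqrt (1 - (x / Real.sqrt A) ^ 2)) * (1 / Real.sqrt A)) x := by
    have := (Real.hasDerivAt_arcsin hne1 hne2).comp x ((hasDerivAt_id x).div_const (Real.sqrt A))
    exact this
  have hsimp : Real.sqrt (1 - (x / Real.sqrt A) ^ 2) = Real.sqrt (A - x ^ 2) / Real.sqrt A := by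
    rw [← Real.sqrt_div hc.le]
    congr 1
    rw [div_pow, Real.sq_sqrt hA.le]
    field_simp
  have h5 : HasDerivAt (fun t : ℝ => t * Real.sqrt (A - t ^ 2)
      + A * Real.arcsin (t / Real.sqrt A))
      ((1 * Real.sqrt (A - x ^ 2) + x * (-(2 * x) / (2 * Real.sqrt (A - x ^ 2))))
        + A * ((1 / Real.sqrt (1 - (x / Real.sqrt A) ^ 2)) * (1 / Real.sqrt A))) x :=
    h3.add (h4.const_mul A)
  have h6 := ((hasDerivAt_id x).const_mul Dy).sub h5
  convert h6 using 1
  case e'_4 => rfl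
  case e'_5 => rfl
  case e'_8 => rfl
  rw [hsimp]
  have hAs : Real.sqrt A ^ 2 = A := Real.sq_sqrt hA.le
  field_simp
  linear_combination (-1) * hs2

theorem Pl_eq_case4 (Δ Dy A : ℝ) (hΔ : 0 < Δ) (hDy : 0 < Dy)
    (hA0 : max (Δ ^ 2) (Dy ^ 2 / 4) ≤ A) (hA1 : A ≤ Δ ^ 2 + Dy ^ 2 / 4) :
    Pl Dy Δ A = 1 - A / (Dy * Δ) *
        (Real.arcsin (Δ / Real.sqrt A)
          - Real.arcsin (Real.sqrt (4 * A - Dy ^ 2) / (2 * Real.sqrt A)))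
      - 1 / (4 * Δ) * Real.sqrt (4 * A - Dy ^ 2)
      - 1 / Dy * Real.sqrt (A - Δ ^ 2) := by
  have hAΔ : Δ ^ 2 ≤ A := le_trans (le_max_left _ _) hA0
  have hADy : Dy ^ 2 / 4 ≤ A := le_trans (le_max_right _ _) hA0
  have hA : 0 < A := lt_of_lt_of_le (by positivity) hAΔ
  set e0 := Real.sqrt (A - Dy ^ 2 / 4) with he0def
  have he00 : 0 ≤ e0 := Real.sqrt_nonneg _
  have he0sq : e0 ^ 2 = A - Dy ^ 2 / 4 := Real.sq_sqrt (by linarith)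
  have he0 : e0 ≤ Δ := by
    rw [he0def, show Δ = Real.sqrt (Δ ^ 2) by rw [Real.sqrt_sq hΔ.le]]
    exact Real.sqrt_le_sqrt (by linarith)
  set S : Set (ℝ × ℝ) := {p : ℝ × ℝ | p.1 ∈ Icc 0 Δ ∧ p.2 ∈ Icc (-(Dy / 2)) (Dy / 2) ∧
    A - p.1 ^ 2 ≤ p.2 ^ 2} with hSdef
  have hSmeas : MeasurableSet S := by
    have : S = (Icc 0 Δ ×ˢ Icc (-(Dy / 2)) (Dy / 2)) ∩ {p : ℝ × ℝ | A - p.1 ^ 2 ≤ p.2 ^ 2} := by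
      ext p; simp only [hSdef, mem_setOf_eq, mem_inter_iff, mem_prod]; tauto
    rw [this]
    exact (measurableSet_Icc.prod measurableSet_Icc).inter
      (measurableSet_le (by fun_prop) (by fun_prop))
  have hsqrtDy : Real.sqrt (Dy ^ 2 / 4) = Dy / 2 := by
    rw [show Dy ^ 2 / 4 = (Dy / 2) ^ 2 by ring, Real.sqrt_sq (by linarith)]
  -- preimage computation
  have hpre : ∀ x : ℝ, volume (Prod.mk x ⁻¹' S)
      = (Icc e0 Δ).indicator (fun x => ENNReal.ofReal (Dy - 2 * Real.sqrt (A - x ^ 2))) x := by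
    intro x
    by_cases hx : x ∈ Icc 0 Δ
    · have hpre_eq : Prod.mk x ⁻¹' S
          = {y : ℝ | y ∈ Icc (-(Dy / 2)) (Dy / 2) ∧ A - x ^ 2 ≤ y ^ 2} := by
        ext y
        simp only [hSdef, mem_preimage, mem_setOf_eq]
        tauto
      rw [hpre_eq, slice_vol Dy A x]
      by_cases hx2 : x ∈ Icc e0 Δ
      · rw [indicator_of_mem hx2]
      · rw [indicator_of_notMem hx2, ENNReal.ofReal_eq_zero]
        have hlt : x < e0 := by
          by_contra h
          exact hx2 ⟨le_of_not_gt h, hx.2⟩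
        have : Dy ^ 2 / 4 < A - x ^ 2 := by
          have := pow_lt_pow_left₀ hlt hx.1 (n := 2) (by norm_num)
          rw [he0sq] at this; linarith
        have : Dy / 2 < Real.sqrt (A - x ^ 2) := by
          rw [← hsqrtDy]
          exact Real.sqrt_lt_sqrt (by positivity) this
        linarith
    · have hpre_eq : Prod.mk x ⁻¹' S = (∅ : Set ℝ) := by
        ext y
        simp only [hSdef, mem_preimage, mem_setOf_eq, mem_empty_iff_false, iff_false]
        tauto
      rw [hpre_eq, measure_empty, indicator_of_notMem]
      intro hx2
      exact hx ⟨le_trans he00 hx2.1, hx2.2⟩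
  have hnn : ∀ x ∈ Icc e0 Δ, 0 ≤ Dy - 2 * Real.sqrt (A - x ^ 2) := by
    intro x hx
    have h1 : e0 ^ 2 ≤ x ^ 2 := pow_le_pow_left₀ he00 hx.1 2
    rw [he0sq] at h1
    have h2 : Real.sqrt (A - x ^ 2) ≤ Dy / 2 := by
      rw [← hsqrtDy]
      exact Real.sqrt_le_sqrt (by linarith)
    linarith
  have hcont : Continuous (fun x : ℝ => Dy - 2 * Real.sqrt (A - x ^ 2)) := by
    fun_prop
  have hvol : volume S = ENNReal.ofReal (∫ x in e0..Δ, (Dy - 2 * Real.sqrt (A - x ^ 2))) := by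
    rw [Measure.volume_eq_prod, Measure.prod_apply hSmeas, lintegral_congr hpre,
      lintegral_indicator measurableSet_Icc,
      intervalIntegral.integral_of_le he0, ← integral_Icc_eq_integral_Ioc,
      ofReal_integral_eq_lintegral_ofReal (hcont.integrableOn_Icc)
        ((ae_restrict_iff' measurableSet_Icc).2 (ae_of_all _ hnn))]
  -- FTC computation
  have hFTC : ∫ x in e0..Δ, (Dy - 2 * Real.sqrt (A - x ^ 2))
      = (Dy * Δ - (Δ * Real.sqrt (A - Δ ^ 2) + A * Real.arcsin (Δ / Real.sqrt A)))
        - (Dy * e0 - (e0 * (Dy / 2) + A * Real.arcsin (e0 / Real.sqrt A))) := by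
    have h := intervalIntegral.integral_eq_sub_of_hasDeriv_right_of_le he0
      (f := fun t : ℝ => Dy * t - (t * Real.sqrt (A - t ^ 2)
        + A * Real.arcsin (t / Real.sqrt A)))
      (f' := fun x : ℝ => Dy - 2 * Real.sqrt (A - x ^ 2))
      (((continuous_const.mul continuous_id).sub
        ((continuous_id.mul (Real.continuous_sqrt.comp
            (continuous_const.sub (continuous_pow 2)))).add
          (continuous_const.mul (Real.continuous_arcsin.comp
            (continuous_id.div_const _))))).continuousOn)
      (fun x hx => by
        have hx0 : 0 ≤ x := le_trans he00 hx.1.le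
        have hxA : x ^ 2 < A := by
          have := pow_lt_pow_left₀ hx.2 hx0 (n := 2) (by norm_num)
          linarith
        exact (deriv_F Dy A x hx0 hxA).hasDerivWithinAt)
      (hcont.intervalIntegrable e0 Δ)
    have hs : Real.sqrt (A - e0 ^ 2) = Dy / 2 := by
      rw [he0sq, show A - (A - Dy ^ 2 / 4) = Dy ^ 2 / 4 by ring, hsqrtDy]
    rw [h]
    simp only [hs]
  have hI0 : 0 ≤ ∫ x in e0..Δ, (Dy - 2 * Real.sqrt (A - x ^ 2)) :=
    intervalIntegral.integral_nonneg he0 (fun x hx => hnn x hx)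
  have he0eq : e0 = Real.sqrt (4 * A - Dy ^ 2) / 2 := by
    rw [he0def, show A - Dy ^ 2 / 4 = (4 * A - Dy ^ 2) / 4 by ring,
      Real.sqrt_div (by linarith) 4, show Real.sqrt 4 = 2 by
        rw [show (4:ℝ) = 2 ^ 2 by norm_num, Real.sqrt_sq (by norm_num)]]
  have harg : e0 / Real.sqrt A = Real.sqrt (4 * A - Dy ^ 2) / (2 * Real.sqrt A) := by
    rw [he0eq]; ring
  rw [Pl, ← hSdef, hvol, ENNReal.toReal_ofReal hI0, hFTC, harg, he0eq]
  field_simp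
  ring
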